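/- arXiv:1509.07968 — 5 statements merged into one kernel-verified Lean document; each statement's English description precedes it below -/
import Mathlib

section
/- Let $L$, $a_k$ be as above and let $q\in\mathbb{R}$. If $q > a_{N-1}$ then the unique minimizer of $f(v)=L(v)+q v$ over $[-1,1]$ is $v=-1$; if $q<-a_{N-1}$ then the unique minimizer is $v=1$. -/
/-- with `N = n + 2` values `U 0 < ... < U (last) = 1` (paper `U_1,...,U_N`),
`a_{N-1} = 2 ∑_{i<N-1} w i`; if `q > a_{N-1}` the unique minimizer of `f v = L v + q v`
over `[-1,1]` is `v = -1`, and if `q < -a_{N-1}` it is `v = 1`. -/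
theorem stmt_2 (n : ℕ) (U w : Fin (n + 2) → ℝ)
    (hU : StrictMono U) (hU0 : 0 ≤ U 0) (hUN : U (Fin.last (n + 1)) = 1)
    (hw : ∀ i, 0 < w i) (hws : ∑ i, w i = 1)
    (q : ℝ)
    (f : ℝ → ℝ) (hf : ∀ v, f v = (∑ i, w i * (|v - U i| + |v + U i|)) + q * v) :
    (q > 2 * ∑ i ∈ Finset.Iio (Fin.last (n + 1)), w i →
      ∀ v ∈ Set.Icc (-1 : ℝ) 1, v ≠ -1 → f (-1) < f v) ∧
    (q < -(2 * ∑ i ∈ Finset.Iio (Fin.last (n + 1)), w i) →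
      ∀ v ∈ Set.Icc (-1 : ℝ) 1, v ≠ 1 → f 1 < f v) := by
  set N := Fin.last (n + 1) with hN
  have hIio : Finset.Iio N = Finset.univ.erase N := by
    ext i
    simp only [Finset.mem_Iio, Finset.mem_erase, Finset.mem_univ, and_true]
    constructor
    · exact fun h => ne_of_lt h
    · exact fun h => lt_of_le_of_ne (Fin.le_last i) h
  have hsplit : ∀ g : Fin (n + 2) → ℝ,
      ∑ i, g i = (∑ i ∈ Finset.Iio N, g i) + g N := by
    intro g
    rw [hIio]
    exact (Finset.sum_erase_add _ _ (Finset.mem_univ N)).symm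
  set S := ∑ i ∈ Finset.Iio N, w i with hS
  have hS1 : S + w N = 1 := by rw [hS, ← hsplit w]; exact hws
  have hUle : ∀ i, U i ≤ 1 := fun i => hUN ▸ hU.monotone (Fin.le_last i)
  have hU0i : ∀ i, 0 ≤ U i := fun i => le_trans hU0 (hU.monotone (Fin.zero_le i))
  -- value at endpoints
  have hend : ∀ s : ℝ, s = 1 ∨ s = -1 → f s = 2 + q * s := by
    intro s hs
    have habs : ∀ i, |s - U i| + |s + U i| = 2 := by
      intro i
      rcases hs with h | h <;> subst h
      · rw [abs_of_nonneg (by linarith [hUle i]), abs_of_nonneg (by linarith [hU0i i])]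
        ring
      · rw [abs_of_nonpos (by linarith [hU0i i]), abs_of_nonpos (by linarith [hUle i])]
        ring
    rw [hf]
    have : ∑ i, w i * (|s - U i| + |s + U i|) = ∑ i, w i * 2 := by
      apply Finset.sum_congr rfl; intro i _; rw [habs i]
    rw [this, ← Finset.sum_mul, hws]; ring
  -- lower bound for f v
  have hlow : ∀ v ∈ Set.Icc (-1 : ℝ) 1, S * (2 * |v|) + w N * 2 + q * v ≤ f v := by
    intro v hv
    obtain ⟨hv1, hv2⟩ := hv
    rw [hf, hsplit (fun i => w i * (|v - U i| + |v + U i|))]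
    have hlast : |v - U N| + |v + U N| = 2 := by
      rw [hUN, abs_of_nonpos (by linarith), abs_of_nonneg (by linarith)]; ring
    have hterm : ∀ i ∈ Finset.Iio N, w i * (2 * |v|) ≤ w i * (|v - U i| + |v + U i|) := by
      intro i _
      apply mul_le_mul_of_nonneg_left _ (hw i).le
      have : |2 * v| ≤ |v - U i| + |v + U i| := by
        have := abs_add_le (v - U i) (v + U i)
        calc |2 * v| = |(v - U i) + (v + U i)| := by ring_nf
        _ ≤ |v - U i| + |v + U i| := abs_add_le _ _
      rw [abs_mul, abs_two] at this
      linarith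
    have hsum : S * (2 * |v|) ≤ ∑ i ∈ Finset.Iio N, w i * (|v - U i| + |v + U i|) := by
      rw [hS, Finset.sum_mul]
      exact Finset.sum_le_sum hterm
    rw [hlast]
    linarith
  constructor
  · intro hq v hv hv1
    have hvm : -1 < v := lt_of_le_of_ne hv.1 (Ne.symm hv1)
    have h1 := hlow v hv
    have h2 := hend (-1) (Or.inr rfl)
    have h3 : -v ≤ |v| := neg_le_abs v
    have hS0 : 0 ≤ S := by
      rw [hS]; exact Finset.sum_nonneg fun i _ => (hw i).le
    rw [h2]
    nlinarith [hv.2]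
  · intro hq v hv hv1
    have hvm : v < 1 := lt_of_le_of_ne hv.2 hv1
    have h1 := hlow v hv
    have h2 := hend 1 (Or.inl rfl)
    have h3 : v ≤ |v| := le_abs_self v
    have hS0 : 0 ≤ S := by
      rw [hS]; exact Finset.sum_nonneg fun i _ => (hw i).le
    rw [h2]
    nlinarith [hv.1]
end

section
/- Let $L$, $a_k$ be as above, let $1\le k\le N-2$, and let $q\in\mathbb{R}$ satisfy $-a_{k+1}<q<-a_k$. Then the unique minimizer of $f(v)=L(v)+qv$ over $[-1,1]$ is $v=U_{k+1}$. -/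
lemma abs_add_abs_eq_two_max (x a : ℝ) (ha : 0 ≤ a) :
    |x - a| + |x + a| = 2 * max |x| a := by
  rcases le_total a |x| with h | h
  · rw [max_eq_left h]
    rcases abs_cases x with ⟨hx, hx0⟩ | ⟨hx, hx0⟩
    · rw [hx] at h
      rw [abs_of_nonneg (by linarith), abs_of_nonneg (by linarith), hx]
      ring
    · rw [hx] at h
      rw [abs_of_nonpos (by linarith), abs_of_nonpos (by linarith), hx]
      ring
  · rw [max_eq_right h]
    have h1 : -a ≤ x := neg_le_of_abs_le h
    have h2 : x ≤ a := le_of_abs_le h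
    rw [abs_of_nonpos (by linarith), abs_of_nonneg (by linarith)]
    ring

/-- with paper indices `1 ≤ k ≤ N - 2` (here `N = n + 2`, so `1 ≤ k ≤ n`),
`a_k = 2 ∑_{i=1}^{k} w_i` (Lean: sum over indices `< k`), if `-a_{k+1} < q < -a_k` then the
unique minimizer of `f v = L v + q v` over `[-1,1]` is `v = U_{k+1}` (Lean index `k`). -/
theorem stmt_3 (n : ℕ) (U w : Fin (n + 2) → ℝ)
    (hU : StrictMono U) (hU0 : 0 ≤ U 0) (hUN : U (Fin.last (n + 1)) = 1)
    (hw : ∀ i, 0 < w i) (hws : ∑ i, w i = 1)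
    (k : ℕ) (hk1 : 1 ≤ k) (hk2 : k ≤ n)
    (q : ℝ)
    (hq1 : -(2 * ∑ i ∈ Finset.univ.filter (fun i : Fin (n + 2) => (i : ℕ) < k + 1), w i) < q)
    (hq2 : q < -(2 * ∑ i ∈ Finset.univ.filter (fun i : Fin (n + 2) => (i : ℕ) < k), w i))
    (f : ℝ → ℝ) (hf : ∀ v, f v = (∑ i, w i * (|v - U i| + |v + U i|)) + q * v) :
    ∀ v ∈ Set.Icc (-1 : ℝ) 1, v ≠ U ⟨k, by omega⟩ → f (U ⟨k, by omega⟩) < f v := by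
  intro v hv hne
  have hkn : k < n + 2 := by omega
  set u : ℝ := U ⟨k, hkn⟩ with hu
  have hU0' : ∀ i, 0 ≤ U i := fun i => hU0.trans (hU.monotone (Fin.zero_le i))
  set g : ℝ → ℝ := fun t => 2 * (∑ i, w i * max t (U i)) + q * t with hg
  have hfg : ∀ x, f x = g |x| + q * (x - |x|) := by
    intro x
    rw [hf, hg]
    have hterm : ∀ i ∈ (Finset.univ : Finset (Fin (n+2))),
        w i * (|x - U i| + |x + U i|) = 2 * (w i * max |x| (U i)) := by
      intro i _
      rw [abs_add_abs_eq_two_max x (U i) (hU0' i)]; ring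
    rw [Finset.sum_congr rfl hterm, ← Finset.mul_sum]
    ring
  have hq0 : q < 0 := by
    have hpos : 0 < ∑ i ∈ Finset.univ.filter (fun i : Fin (n + 2) => (i : ℕ) < k), w i := by
      apply Finset.sum_pos (fun i _ => hw i)
      exact ⟨⟨0, by omega⟩, by simp; omega⟩
    linarith
  -- the key convexity-type inequality for `g` on the whole real line
  have key : ∀ t : ℝ, t ≠ u → g u < g t := by
    intro t htne
    rcases htne.lt_or_gt with hlt | hgt
    · -- t < u
      set B := Finset.univ.filter (fun i : Fin (n + 2) => (i : ℕ) < k) with hB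
      have hsplit1 := Finset.sum_filter_add_sum_filter_not Finset.univ
        (fun i : Fin (n + 2) => (i : ℕ) < k) (fun i => w i * max u (U i))
      have hsplit2 := Finset.sum_filter_add_sum_filter_not Finset.univ
        (fun i : Fin (n + 2) => (i : ℕ) < k) (fun i => w i * max t (U i))
      have h1 : ∑ i ∈ B, w i * max u (U i)
          ≤ ∑ i ∈ B, w i * max t (U i) + (∑ i ∈ B, w i) * (u - t) := by
        rw [Finset.sum_mul, ← Finset.sum_add_distrib]
        apply Finset.sum_le_sum
        intro i _
        have hmax : max u (U i) ≤ max t (U i) + (u - t) := by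
          apply max_le
          · have := le_max_left t (U i); linarith
          · have := le_max_right t (U i); linarith
        nlinarith [hw i]
      have h2 : ∑ i ∈ Finset.univ.filter (fun i : Fin (n + 2) => ¬ (i : ℕ) < k),
            w i * max u (U i)
          ≤ ∑ i ∈ Finset.univ.filter (fun i : Fin (n + 2) => ¬ (i : ℕ) < k),
            w i * max t (U i) := by
        apply Finset.sum_le_sum
        intro i hi
        have hik : k ≤ (i : ℕ) := by
          have := (Finset.mem_filter.mp hi).2; omega
        have hui : u ≤ U i := hU.monotone (by rw [Fin.le_def]; exact hik)
        have : max u (U i) = U i := max_eq_right hui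
        rw [this]
        exact mul_le_mul_of_nonneg_left (le_max_right t (U i)) (hw i).le
      have hsum : ∑ i, w i * max u (U i)
          ≤ ∑ i, w i * max t (U i) + (∑ i ∈ B, w i) * (u - t) := by
        rw [← hsplit1, ← hsplit2]; linarith
      have hprod : (2 * (∑ i ∈ B, w i) + q) * (u - t) < 0 :=
        mul_neg_of_neg_of_pos (by rw [hB] at *; linarith) (by linarith)
      rw [hg]
      simp only
      nlinarith
    · -- u < t
      set A := Finset.univ.filter (fun i : Fin (n + 2) => (i : ℕ) < k + 1) with hA
      have hsplit1 := Finset.sum_filter_add_sum_filter_not Finset.univ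
        (fun i : Fin (n + 2) => (i : ℕ) < k + 1) (fun i => w i * max u (U i))
      have hsplit2 := Finset.sum_filter_add_sum_filter_not Finset.univ
        (fun i : Fin (n + 2) => (i : ℕ) < k + 1) (fun i => w i * max t (U i))
      have h1 : ∑ i ∈ A, w i * max u (U i) + (∑ i ∈ A, w i) * (t - u)
          ≤ ∑ i ∈ A, w i * max t (U i) := by
        rw [Finset.sum_mul, ← Finset.sum_add_distrib]
        apply Finset.sum_le_sum
        intro i hi
        have hik : (i : ℕ) ≤ k := by
          have := (Finset.mem_filter.mp hi).2; omega
        have hui : U i ≤ u := hU.monotone (by rw [Fin.le_def]; exact hik)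
        rw [max_eq_left hui, max_eq_left (by linarith : U i ≤ t)]
        nlinarith [hw i]
      have h2 : ∑ i ∈ Finset.univ.filter (fun i : Fin (n + 2) => ¬ (i : ℕ) < k + 1),
            w i * max u (U i)
          ≤ ∑ i ∈ Finset.univ.filter (fun i : Fin (n + 2) => ¬ (i : ℕ) < k + 1),
            w i * max t (U i) := by
        apply Finset.sum_le_sum
        intro i _
        exact mul_le_mul_of_nonneg_left (max_le_max hgt.le le_rfl) (hw i).le
      have hsum : ∑ i, w i * max u (U i) + (∑ i ∈ A, w i) * (t - u)
          ≤ ∑ i, w i * max t (U i) := by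
        rw [← hsplit1, ← hsplit2]; linarith
      have hprod : 0 < (2 * (∑ i ∈ A, w i) + q) * (t - u) :=
        mul_pos (by rw [hA] at *; linarith) (by linarith)
      rw [hg]
      simp only
      nlinarith
  have hfu : f u = g u := by
    rw [hfg u, abs_of_nonneg (hU0' _)]; ring
  show f u < f v
  rcases le_or_gt 0 v with hv0 | hv0
  · have hfv : f v = g v := by rw [hfg v, abs_of_nonneg hv0]; ring
    rw [hfv, hfu]
    exact key v hne
  · have hfv : f v = g (-v) + q * (2 * v) := by
      rw [hfg v, abs_of_neg hv0]; ring
    have h3 : g u ≤ g (-v) := by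
      by_cases h : -v = u
      · rw [h]
      · exact (key _ h).le
    have h4 : 0 < q * (2 * v) := mul_pos_of_neg_of_neg hq0 (by linarith)
    rw [hfv, hfu]
    linarith
end

section
/- Let $L$, $a_k$ be as above and let $q=-a_k$ for some $1\le k\le N-1$. Then the set of minimizers of $f(v)=L(v)+qv$ over $[-1,1]$ is exactly the interval $[U_k,U_{k+1}]$. -/
/-!
For `u ≥ 0` the tent `|v - u| + |v + u| = 2 max(|v|, u)` lies above the line `2 v`, touching it
exactly for `v ≥ u`, and above the constant `2 u`, touching it exactly for `|v| ≤ u`.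
Subtracting the line from the tents of `U_1, …, U_k` and the constant from the others absorbs
the slope `q = -a_k` and writes `f` as a constant plus nonnegative terms, whose common zero set
is `[U_k, U_{k+1}]`; that set is therefore the set of minimizers.
-/

open Finset

section Tent

variable {α : Type*} [Field α] [LinearOrder α] [IsStrictOrderedRing α]

theorem two_mul_le_abs_sub_add_abs_add (u v : α) : 2 * v ≤ |v - u| + |v + u| := by
  linarith [le_abs_self (v - u), le_abs_self (v + u)]

theorem abs_sub_add_abs_add_eq_two_mul_iff (u v : α) :
    |v - u| + |v + u| = 2 * v ↔ |u| ≤ v := by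
  constructor
  · intro h
    rw [abs_le]
    constructor <;> linarith [le_abs_self (v - u), neg_abs_le (v - u), le_abs_self (v + u),
      neg_abs_le (v + u)]
  · intro h
    rw [abs_of_nonneg (by linarith [le_abs_self u]), abs_of_nonneg (by linarith [neg_abs_le u])]
    ring

theorem two_mul_le_abs_sub_add_abs_add' (u v : α) : 2 * u ≤ |v - u| + |v + u| := by
  simpa [abs_sub_comm, add_comm] using two_mul_le_abs_sub_add_abs_add v u

theorem abs_sub_add_abs_add_eq_two_mul_iff' (u v : α) :
    |v - u| + |v + u| = 2 * u ↔ |v| ≤ u := by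
  simpa [abs_sub_comm, add_comm] using abs_sub_add_abs_add_eq_two_mul_iff v u

end Tent

theorem setOf_minimizers_eq_common_zeros {ι α : Type*} {s : Finset ι} {g : ι → α → ℝ}
    {S : Set α} {f : α → ℝ} {c : ℝ} (hf : ∀ v, f v = c + ∑ i ∈ s, g i v)
    (hg : ∀ i ∈ s, ∀ v, 0 ≤ g i v) (hzero : ∃ v₀ ∈ S, ∀ i ∈ s, g i v₀ = 0) :
    {v ∈ S | ∀ y ∈ S, f v ≤ f y} = {v ∈ S | ∀ i ∈ s, g i v = 0} := by
  obtain ⟨v₀, hv₀S, hv₀⟩ := hzero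
  have hf_ge : ∀ v, c ≤ f v := fun v => by
    rw [hf]; linarith [sum_nonneg fun i hi => hg i hi v]
  have hf_eq : ∀ v, f v = c ↔ ∀ i ∈ s, g i v = 0 := fun v => by
    rw [hf, add_eq_left, sum_eq_zero_iff_of_nonneg fun i hi => hg i hi v]
  ext v
  refine and_congr_right fun _ => ⟨fun hmin => ?_, fun hv y _ => ?_⟩
  · exact (hf_eq v).1 (le_antisymm (hf_eq v₀ |>.2 hv₀ ▸ hmin v₀ hv₀S) (hf_ge v))
  · exact (hf_eq v).2 hv ▸ hf_ge y

theorem forall_ite_iff_mem_Icc {m : ℕ} {U : Fin m → ℝ} (hU : Monotone U)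
    (hU0 : ∀ i, 0 ≤ U i) {k : ℕ} (hk1 : 1 ≤ k) (hkm : k < m) (v : ℝ) :
    (∀ i : Fin m, if (i : ℕ) < k then |U i| ≤ v else |v| ≤ U i) ↔
      v ∈ Set.Icc (U ⟨k - 1, by omega⟩) (U ⟨k, hkm⟩) := by
  constructor
  · intro h
    have hleft := h ⟨k - 1, by omega⟩
    have hright := h ⟨k, hkm⟩
    rw [if_pos (by simp; omega)] at hleft
    rw [if_neg (by simp)] at hright
    exact ⟨(le_abs_self _).trans hleft, (le_abs_self _).trans hright⟩
  · rintro ⟨hv1, hv2⟩ i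
    split_ifs with hi
    · rw [abs_of_nonneg (hU0 i)]
      exact (hU (Fin.mk_le_mk.2 (by omega))).trans hv1
    · rw [abs_of_nonneg ((hU0 _).trans hv1)]
      exact hv2.trans (hU (Fin.mk_le_mk.2 (by omega)))

/-- with paper indices `1 ≤ k ≤ N - 1` (here `N = n + 2`, so `1 ≤ k ≤ n + 1`),
if `q = -a_k` then the set of minimizers of `f v = L v + q v` over `[-1,1]` is exactly
`[U_k, U_{k+1}]` (Lean: `[U ⟨k-1⟩, U ⟨k⟩]`). -/
theorem stmt_4 (n : ℕ) (U w : Fin (n + 2) → ℝ)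
    (hU : StrictMono U) (hU0 : 0 ≤ U 0) (hUN : U (Fin.last (n + 1)) = 1)
    (hw : ∀ i, 0 < w i)
    (k : ℕ) (hk1 : 1 ≤ k) (hk2 : k ≤ n + 1)
    (q : ℝ)
    (hq : q = -(2 * ∑ i ∈ Finset.univ.filter (fun i : Fin (n + 2) => (i : ℕ) < k), w i))
    (f : ℝ → ℝ) (hf : ∀ v, f v = (∑ i, w i * (|v - U i| + |v + U i|)) + q * v) :
    {v ∈ Set.Icc (-1 : ℝ) 1 | ∀ y ∈ Set.Icc (-1 : ℝ) 1, f v ≤ f y}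
      = Set.Icc (U ⟨k - 1, by omega⟩) (U ⟨k, by omega⟩) := by
  have hU_nonneg : ∀ i, 0 ≤ U i := fun i => hU0.trans (hU.monotone (Fin.zero_le i))
  set g : Fin (n + 2) → ℝ → ℝ := fun i v =>
    w i * (|v - U i| + |v + U i| - 2 * if (i : ℕ) < k then v else U i)
  have hdecomp : ∀ v, f v = 2 * ∑ i ∈ univ.filter (fun i : Fin (n + 2) => ¬ (i : ℕ) < k),
      w i * U i + ∑ i, g i v := by
    intro v
    simp only [g, mul_sub, sum_sub_distrib, mul_left_comm _ (2 : ℝ), ← mul_sum, mul_ite,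
      sum_ite, ← sum_mul, hf, hq]
    ring
  have hg_eq_zero : ∀ i v, g i v = 0 ↔ if (i : ℕ) < k then |U i| ≤ v else |v| ≤ U i := by
    intro i v
    simp only [g, mul_eq_zero, (hw i).ne', false_or, sub_eq_zero]
    split_ifs
    exacts [abs_sub_add_abs_add_eq_two_mul_iff _ _, abs_sub_add_abs_add_eq_two_mul_iff' _ _]
  have hg_nonneg : ∀ i ∈ univ, ∀ v, 0 ≤ g i v := fun i _ v => by
    refine mul_nonneg (hw i).le (sub_nonneg.2 ?_)
    split_ifs
    exacts [two_mul_le_abs_sub_add_abs_add _ _, two_mul_le_abs_sub_add_abs_add' _ _]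
  have hzeros : ∀ v, (∀ i ∈ univ, g i v = 0) ↔
      v ∈ Set.Icc (U ⟨k - 1, by omega⟩) (U ⟨k, by omega⟩) := fun v => by
    simpa only [mem_univ, true_imp_iff, hg_eq_zero] using
      forall_ite_iff_mem_Icc hU.monotone hU_nonneg hk1 (by omega) v
  have hIcc_subset : Set.Icc (U ⟨k - 1, by omega⟩) (U ⟨k, by omega⟩) ⊆ Set.Icc (-1) 1 :=
    Set.Icc_subset_Icc (by linarith [hU_nonneg ⟨k - 1, by omega⟩])
      (hUN ▸ hU.monotone (Fin.le_last _))
  have hUk_mem : U ⟨k, by omega⟩ ∈ Set.Icc (U ⟨k - 1, by omega⟩) (U ⟨k, by omega⟩) :=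
    ⟨hU.monotone (Fin.mk_le_mk.2 (by omega)), le_rfl⟩
  rw [setOf_minimizers_eq_common_zeros hdecomp hg_nonneg
    ⟨_, hIcc_subset hUk_mem, (hzeros _).2 hUk_mem⟩]
  ext v
  simp only [Set.mem_ofPred_eq, hzeros]
  exact ⟨And.right, fun hv => ⟨hIcc_subset hv, hv⟩⟩
end

section
/- With $J$ and $J_{\min}$ as above, if a measurable $u:[0,T]\to\mathbb{R}$ with $|u(t)|\le 1$ a.e. satisfies $J(u)=J_{\min}$, then $|u(t)|\le U_1$ for almost every $t\in[0,T]$. -/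
open MeasureTheory

/-!
Pointwise, `|x - c| + |x + c| ≥ 2c` and `|x - c| + |x + c| ≥ 2|x|`. The first bound shows that
every summand of `J(u)` is at least `2 T w_i U_i`, so `J(u) = J_min` forces equality in each
summand, in particular for `U_1`. A nonnegative integrand with zero integral vanishes a.e., so
`|u - U_1| + |u + U_1| = 2 U_1` a.e., and the second bound gives `|u| ≤ U_1` a.e.
-/

theorem two_mul_le_abs_sub_add_abs_add_s7 (x c : ℝ) : 2 * c ≤ |x - c| + |x + c| := by
  linarith [neg_le_abs (x - c), le_abs_self (x + c)]

theorem two_mul_abs_le_abs_sub_add_abs_add (x c : ℝ) : 2 * |x| ≤ |x - c| + |x + c| := by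
  rcases abs_cases x with ⟨hx, -⟩ | ⟨hx, -⟩ <;>
    linarith [le_abs_self (x - c), neg_le_abs (x - c), le_abs_self (x + c), neg_le_abs (x + c)]

section

variable {α : Type*} [MeasurableSpace α] {μ : Measure α} [IsFiniteMeasure μ] {u : α → ℝ}

theorem integrable_abs_sub_add_abs_add (hu : Integrable u μ) (c : ℝ) :
    Integrable (fun t => |u t - c| + |u t + c|) μ :=
  (hu.sub (integrable_const c)).abs.add (hu.add (integrable_const c)).abs

theorem integral_abs_sub_add_abs_add (hu : Integrable u μ) (c : ℝ) :
    ∫ t, (|u t - c| + |u t + c|) ∂μ = ∫ t, |u t - c| ∂μ + ∫ t, |u t + c| ∂μ :=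
  integral_add (hu.sub (integrable_const c)).abs (hu.add (integrable_const c)).abs

theorem two_mul_measureReal_le_integral_abs_sub_add_integral_abs_add
    (hu : Integrable u μ) (c : ℝ) :
    2 * c * μ.real Set.univ ≤ ∫ t, |u t - c| ∂μ + ∫ t, |u t + c| ∂μ := by
  rw [← integral_abs_sub_add_abs_add hu, mul_comm, ← smul_eq_mul, ← integral_const]
  exact integral_mono (integrable_const _)
    (integrable_abs_sub_add_abs_add hu c)
    fun t => two_mul_le_abs_sub_add_abs_add_s7 (u t) c

theorem ae_abs_le_of_integral_abs_sub_add_integral_abs_add_le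
    (hu : Integrable u μ) {c : ℝ}
    (h : ∫ t, |u t - c| ∂μ + ∫ t, |u t + c| ∂μ ≤ 2 * c * μ.real Set.univ) :
    ∀ᵐ t ∂μ, |u t| ≤ c := by
  have heq : (fun _ => 2 * c) =ᵐ[μ] fun t => |u t - c| + |u t + c| := by
    refine (integral_eq_iff_of_ae_le (integrable_const _) (integrable_abs_sub_add_abs_add hu c)
      (.of_forall fun t => two_mul_le_abs_sub_add_abs_add_s7 (u t) c)).mp ?_
    rw [integral_const, integral_abs_sub_add_abs_add hu, smul_eq_mul]
    linarith [two_mul_measureReal_le_integral_abs_sub_add_integral_abs_add hu c]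
  filter_upwards [heq] with t ht
  linarith [two_mul_abs_le_abs_sub_add_abs_add (u t) c]

end

theorem stmt_7_general (T : ℝ) (n : ℕ) (U w : Fin (n + 1) → ℝ)
    (hw : ∀ i, 0 < w i)
    (u : ℝ → ℝ) (hum : Measurable u)
    (hub : ∀ᵐ t ∂(volume.restrict (Set.Icc (0 : ℝ) T)), |u t| ≤ 1)
    (hJ : (∑ i, w i * ((∫ t in Set.Icc (0 : ℝ) T, |u t - U i|) +
                       (∫ t in Set.Icc (0 : ℝ) T, |u t + U i|)))
          = 2 * T * ∑ i, w i * U i) :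
    ∀ᵐ t ∂(volume.restrict (Set.Icc (0 : ℝ) T)), |u t| ≤ U 0 := by
  rcases le_or_gt T 0 with hT | hT
  · have hnull : volume (Set.Icc (0 : ℝ) T) = 0 := by
      rw [Real.volume_Icc, ENNReal.ofReal_eq_zero]
      linarith
    simp [Measure.restrict_eq_zero.mpr hnull]
  set μ := volume.restrict (Set.Icc (0 : ℝ) T)
  have hu : Integrable u μ := .of_bound hum.aestronglyMeasurable 1 hub
  have hvol : μ.real Set.univ = T := by simp [μ, hT.le]
  have hlow i : w i * (2 * U i * T) ≤ w i * (∫ t, |u t - U i| ∂μ + ∫ t, |u t + U i| ∂μ) :=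
    mul_le_mul_of_nonneg_left
      (hvol ▸ two_mul_measureReal_le_integral_abs_sub_add_integral_abs_add hu (U i)) (hw i).le
  have h0 := (Finset.sum_eq_sum_iff_of_le fun i _ => hlow i).mp
    (by rw [hJ, Finset.mul_sum]; congr 1; ext i; ring) 0 (Finset.mem_univ 0)
  refine ae_abs_le_of_integral_abs_sub_add_integral_abs_add_le hu (le_of_eq ?_)
  rw [hvol]
  exact (mul_left_cancel₀ (hw 0).ne' h0).symm

/-- if a measurable `u` with `|u| ≤ 1` a.e. attains `J(u) = J_min`, then
`|u(t)| ≤ U 0` for almost every `t ∈ [0,T]`. -/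
theorem stmt_7 (T : ℝ) (hT : 0 < T) (n : ℕ) (U w : Fin (n + 1) → ℝ)
    (hU : StrictMono U) (hU0 : 0 ≤ U 0) (hUN : U (Fin.last n) = 1)
    (hw : ∀ i, 0 < w i) (hws : ∑ i, w i = 1)
    (u : ℝ → ℝ) (hum : Measurable u)
    (hub : ∀ᵐ t ∂(volume.restrict (Set.Icc (0 : ℝ) T)), |u t| ≤ 1)
    (hJ : (∑ i, w i * ((∫ t in Set.Icc (0 : ℝ) T, |u t - U i|) +
                       (∫ t in Set.Icc (0 : ℝ) T, |u t + U i|)))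
          = 2 * T * ∑ i, w i * U i) :
    ∀ᵐ t ∂(volume.restrict (Set.Icc (0 : ℝ) T)), |u t| ≤ U 0 :=
  stmt_7_general T n U w hw u hum hub hJ
end

section
/- (Uniqueness via convexity and countable range.) Let $\mathcal{U}$ be a convex set of measurable functions $u:[0,T]\to[-1,1]$ and $J:\mathcal{U}\to\mathbb{R}$ convex. Suppose $u_1,u_2$ are both minimizers of $J$ over $\mathcal{U}$, and suppose every minimizer $u$ satisfies $u(t)\in\mathbb{U}$ for a.e. $t$, where $\mathbb{U}\subset\mathbb{R}$ is a finite set. Then $u_1=u_2$ almost everywhere. -/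
open MeasureTheory

/-!
Convexity of `J` makes every convex combination `λ u₁ + (1 - λ) u₂` a minimizer, so for each of
countably many distinct weights `λ` it takes values in the finite set `𝕌` almost everywhere.
At a point where `u₁ t ≠ u₂ t` the values `λ u₁ t + (1 - λ) u₂ t` are pairwise distinct, and
infinitely many of them cannot lie in `𝕌`.
-/

theorem eq_of_forall_convexCombination_mem {S : Set ℝ} (hS : S.Finite) {c : ℕ → ℝ}
    (hc : Function.Injective c) {a b : ℝ} (h : ∀ n, c n * a + (1 - c n) * b ∈ S) : a = b := by
  by_contra hab
  have hinj : Function.Injective fun n => c n * a + (1 - c n) * b := fun n m hnm =>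
    hc <| mul_right_cancel₀ (sub_ne_zero.2 hab) (by linear_combination hnm)
  exact Set.infinite_range_of_injective hinj (hS.subset (Set.range_subset_iff.2 h))

theorem ae_eq_of_forall_convexCombination_ae_mem {α : Type*} [MeasurableSpace α]
    {μ : Measure α} {S : Set ℝ} (hS : S.Finite) {f g : α → ℝ}
    (h : ∀ lam ∈ Set.Icc (0 : ℝ) 1, ∀ᵐ x ∂μ, lam * f x + (1 - lam) * g x ∈ S) :
    f =ᵐ[μ] g := by
  set c : ℕ → ℝ := fun n => ((n : ℝ) + 1)⁻¹
  have hc_mem (n : ℕ) : c n ∈ Set.Icc (0 : ℝ) 1 :=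
    ⟨by positivity, inv_le_one_of_one_le₀ (by simp)⟩
  have hc_inj : Function.Injective c := fun n m hnm => by
    simpa [c] using hnm
  filter_upwards [ae_all_iff.2 fun n => h (c n) (hc_mem n)] with x hx
  exact eq_of_forall_convexCombination_mem hS hc_inj hx

theorem convexCombination_le_of_forall_le {α : Type*} {𝒰 : Set (α → ℝ)} {J : (α → ℝ) → ℝ}
    (hJconv : ∀ u ∈ 𝒰, ∀ v ∈ 𝒰, ∀ lam ∈ Set.Icc (0 : ℝ) 1,
      J (fun t => lam * u t + (1 - lam) * v t) ≤ lam * J u + (1 - lam) * J v)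
    {u₁ u₂ : α → ℝ} (hu₁ : u₁ ∈ 𝒰) (hu₂ : u₂ ∈ 𝒰) {lam : ℝ} (hlam : lam ∈ Set.Icc (0 : ℝ) 1)
    {v : α → ℝ} (h₁ : J u₁ ≤ J v) (h₂ : J u₂ ≤ J v) :
    J (fun t => lam * u₁ t + (1 - lam) * u₂ t) ≤ J v :=
  calc J (fun t => lam * u₁ t + (1 - lam) * u₂ t)
      ≤ lam * J u₁ + (1 - lam) * J u₂ := hJconv u₁ hu₁ u₂ hu₂ lam hlam
    _ ≤ lam * J v + (1 - lam) * J v := by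
        gcongr
        · exact hlam.1
        · linarith [hlam.2]
    _ = J v := by ring

theorem stmt_14_general (T : ℝ)
    (𝒰 : Set (ℝ → ℝ))
    (h𝒰conv : ∀ u ∈ 𝒰, ∀ v ∈ 𝒰, ∀ lam ∈ Set.Icc (0 : ℝ) 1,
      (fun t => lam * u t + (1 - lam) * v t) ∈ 𝒰)
    (J : (ℝ → ℝ) → ℝ)
    (hJconv : ∀ u ∈ 𝒰, ∀ v ∈ 𝒰, ∀ lam ∈ Set.Icc (0 : ℝ) 1,
      J (fun t => lam * u t + (1 - lam) * v t) ≤ lam * J u + (1 - lam) * J v)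
    (𝕌 : Set ℝ) (h𝕌 : 𝕌.Finite)
    (hdisc : ∀ u ∈ 𝒰, (∀ v ∈ 𝒰, J u ≤ J v) →
      ∀ᵐ t ∂(volume.restrict (Set.Icc (0 : ℝ) T)), u t ∈ 𝕌)
    (u₁ : ℝ → ℝ) (hu₁ : u₁ ∈ 𝒰) (hmin₁ : ∀ v ∈ 𝒰, J u₁ ≤ J v)
    (u₂ : ℝ → ℝ) (hu₂ : u₂ ∈ 𝒰) (hmin₂ : ∀ v ∈ 𝒰, J u₂ ≤ J v) :
    u₁ =ᵐ[volume.restrict (Set.Icc (0 : ℝ) T)] u₂ :=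
  ae_eq_of_forall_convexCombination_ae_mem h𝕌 fun lam hlam =>
    hdisc _ (h𝒰conv u₁ hu₁ u₂ hu₂ lam hlam) fun v hv =>
      convexCombination_le_of_forall_le hJconv hu₁ hu₂ hlam (hmin₁ v hv) (hmin₂ v hv)

/-- uniqueness of the minimizer via convexity and finite range: if `𝒰` is a
convex family of measurable controls `[0,T] → [-1,1]`, `J` is convex on `𝒰`, `u₁, u₂` are
minimizers of `J` over `𝒰`, and every minimizer takes values a.e. in a finite set `𝕌`, then
`u₁ = u₂` a.e. on `[0,T]`. -/
theorem stmt_14 (T : ℝ) (hT : 0 < T)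
    (𝒰 : Set (ℝ → ℝ))
    (h𝒰meas : ∀ u ∈ 𝒰, Measurable u)
    (h𝒰bdd : ∀ u ∈ 𝒰, ∀ t ∈ Set.Icc (0 : ℝ) T, u t ∈ Set.Icc (-1 : ℝ) 1)
    (h𝒰conv : ∀ u ∈ 𝒰, ∀ v ∈ 𝒰, ∀ lam ∈ Set.Icc (0 : ℝ) 1,
      (fun t => lam * u t + (1 - lam) * v t) ∈ 𝒰)
    (J : (ℝ → ℝ) → ℝ)
    (hJconv : ∀ u ∈ 𝒰, ∀ v ∈ 𝒰, ∀ lam ∈ Set.Icc (0 : ℝ) 1,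
      J (fun t => lam * u t + (1 - lam) * v t) ≤ lam * J u + (1 - lam) * J v)
    (𝕌 : Set ℝ) (h𝕌 : 𝕌.Finite)
    (hdisc : ∀ u ∈ 𝒰, (∀ v ∈ 𝒰, J u ≤ J v) →
      ∀ᵐ t ∂(volume.restrict (Set.Icc (0 : ℝ) T)), u t ∈ 𝕌)
    (u₁ : ℝ → ℝ) (hu₁ : u₁ ∈ 𝒰) (hmin₁ : ∀ v ∈ 𝒰, J u₁ ≤ J v)
    (u₂ : ℝ → ℝ) (hu₂ : u₂ ∈ 𝒰) (hmin₂ : ∀ v ∈ 𝒰, J u₂ ≤ J v) :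
    u₁ =ᵐ[volume.restrict (Set.Icc (0 : ℝ) T)] u₂ :=
  stmt_14_general T 𝒰 h𝒰conv J hJconv 𝕌 h𝕌 hdisc u₁ hu₁ hmin₁ u₂ hu₂ hmin₂
end
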